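/- Let n ≥ 1, s ∈ ℝ and 0 < r ≤ ∞. For every g ∈ C_c^∞(ℝⁿ), ‖χ_{A_1} − g‖_{K̇^s_{∞,r}} ≥ min(1, 2^s)/2, where χ_{A_1} is the indicator function of the annulus A_1 = {x ∈ ℝⁿ : 1 ≤ |x| < 2}. In particular, C_c^∞(ℝⁿ) is not dense in K̇^s_{∞,r}(ℝⁿ). -/

import Mathlib

/-!
A continuous `g` cannot jump across the unit sphere. At a point `x₀` with `‖x₀‖ = 1`,
the essential supremum of `χ_{A₁} - g` is at least `|1 - g x₀|` on `A₁` (approaching `x₀` from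
outside) and at least `|g x₀|` on `A₀` (from inside). These two numbers add up to at least `1`,
and the Herz norm weights them by `2^s` and `1`. As `χ_{A₁}` itself has finite Herz norm, it is
not a limit of test functions.
-/

open MeasureTheory Set ENNReal Filter

noncomputable section

abbrev Euc (n : ℕ) : Type := EuclideanSpace ℝ (Fin n)

def annulus (n : ℕ) (j : ℤ) : Set (Euc n) :=
  {x : Euc n | (2 : ℝ) ^ (j - 1) ≤ ‖x‖ ∧ ‖x‖ < (2 : ℝ) ^ j}

def herzNorm (n : ℕ) (s : ℝ) (q r : ℝ≥0∞) (f : Euc n → ℝ) : ℝ≥0∞ :=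
  if r = ⊤ then
    ⨆ j : ℤ, ENNReal.ofReal ((2 : ℝ) ^ ((j : ℝ) * s)) *
      eLpNorm ((annulus n j).indicator f) q volume
  else
    (∑' j : ℤ, (ENNReal.ofReal ((2 : ℝ) ^ ((j : ℝ) * s)) *
      eLpNorm ((annulus n j).indicator f) q volume) ^ r.toReal) ^ (1 / r.toReal)

open Metric

section ContinuousLowerBound

variable {X E : Type*} [TopologicalSpace X] [MeasurableSpace X] {μ : Measure X}
  [μ.IsOpenPosMeasure] [NormedAddCommGroup E]

theorem enorm_le_eLpNorm_top_of_eqOn {f F : X → E} (hf : Continuous f) {U : Set X}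
    (hU : IsOpen U) (hfF : EqOn f F U) {x : X} (hx : x ∈ closure U) :
    ‖f x‖ₑ ≤ eLpNorm F ⊤ μ := by
  by_contra! hlt
  set W := {y | eLpNorm F ⊤ μ < ‖f y‖ₑ}
  have hW : IsOpen W := isOpen_lt continuous_const hf.enorm
  obtain ⟨y, hyW, hyU⟩ := mem_closure_iff.1 hx W hW hlt
  have hsub : W ∩ U ⊆ {y | eLpNormEssSup F μ < ‖F y‖ₑ} := fun z ⟨hzW, hzU⟩ => by
    simpa [W, ← hfF hzU] using hzW
  exact (hW.inter hU).measure_ne_zero μ ⟨y, hyW, hyU⟩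
    (measure_mono_null hsub meas_eLpNormEssSup_lt)

end ContinuousLowerBound

section Shells

variable {E : Type*} [NormedAddCommGroup E] [NormedSpace ℝ E] {a b : ℝ}

theorem sphere_subset_closure_ball_diff_closedBall_inner (c : E) (ha : a ≠ 0) (hab : a < b) :
    sphere c a ⊆ closure (ball c b \ closedBall c a) := fun x hx => by
  rw [sdiff_eq]
  refine isOpen_ball.inter_closure ⟨?_, ?_⟩
  · simp [mem_sphere.1 hx ▸ hab]
  · rw [closure_compl, interior_closedBall c ha]
    simp [mem_sphere.1 hx]

theorem sphere_subset_closure_ball_diff_closedBall_outer (c : E) (hb : b ≠ 0) (hab : a < b) :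
    sphere c b ⊆ closure (ball c b \ closedBall c a) := fun x hx => by
  rw [sdiff_eq, inter_comm]
  refine isClosed_closedBall.isOpen_compl.inter_closure ⟨?_, ?_⟩
  · simp [mem_sphere.1 hx ▸ hab]
  · rw [closure_ball c hb]
    exact sphere_subset_closedBall hx

end Shells

section Annulus

variable {n : ℕ}

theorem ball_diff_closedBall_subset_annulus (j : ℤ) :
    ball (0 : Euc n) (2 ^ j) \ closedBall 0 (2 ^ (j - 1)) ⊆ annulus n j := fun x ⟨hb, hc⟩ => by
  simp only [mem_ball_zero_iff, mem_closedBall_zero_iff, not_le] at hb hc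
  exact ⟨hc.le, hb⟩

theorem measurableSet_annulus (j : ℤ) : MeasurableSet (annulus n j) :=
  (measurableSet_le measurable_const measurable_norm).inter
    (measurableSet_lt measurable_norm measurable_const)

theorem annulus_disjoint {j k : ℤ} (hjk : j ≠ k) : Disjoint (annulus n j) (annulus n k) := by
  wlog hlt : j < k generalizing j k
  · exact (this hjk.symm (hjk.lt_or_gt.resolve_left hlt)).symm
  refine disjoint_left.2 fun x ⟨_, hxj⟩ ⟨hxk, _⟩ => ?_
  have : (2 : ℝ) ^ j ≤ 2 ^ (k - 1) := zpow_le_zpow_right₀ one_le_two (by omega)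
  linarith

theorem annulus_indicator_annulus_indicator {j k : ℤ} (hjk : j ≠ k) (f : Euc n → ℝ) :
    (annulus n j).indicator ((annulus n k).indicator f) = 0 := by
  rw [indicator_indicator, (annulus_disjoint hjk).inter_eq, indicator_empty]
  rfl

variable {s : ℝ} {q r : ℝ≥0∞}

theorem annulus_term_le_herzNorm (hr : 0 < r) (f : Euc n → ℝ) (j : ℤ) :
    ENNReal.ofReal (2 ^ ((j : ℝ) * s)) * eLpNorm ((annulus n j).indicator f) q volume ≤
      herzNorm n s q r f := by
  unfold herzNorm
  split_ifs with hr_top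
  · exact le_iSup_of_le j le_rfl
  · have hr' : r.toReal ≠ 0 := (ENNReal.toReal_pos hr.ne' hr_top).ne'
    refine le_trans ?_ (ENNReal.rpow_le_rpow (ENNReal.le_tsum j) (by positivity))
    rw [← ENNReal.rpow_mul, mul_one_div_cancel hr', ENNReal.rpow_one]

theorem herzNorm_indicator_annulus (hr : 0 < r) (f : Euc n → ℝ) (k : ℤ) :
    herzNorm n s q r ((annulus n k).indicator f) =
      ENNReal.ofReal (2 ^ ((k : ℝ) * s)) * eLpNorm ((annulus n k).indicator f) q volume := by
  have hself : (annulus n k).indicator ((annulus n k).indicator f) = (annulus n k).indicator f :=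
    by rw [indicator_indicator, inter_self]
  have hterm : ∀ j ≠ k, ENNReal.ofReal (2 ^ ((j : ℝ) * s)) *
      eLpNorm ((annulus n j).indicator ((annulus n k).indicator f)) q volume = 0 := fun j hj => by
    rw [annulus_indicator_annulus_indicator hj, eLpNorm_zero, mul_zero]
  have hle := annulus_term_le_herzNorm (s := s) (q := q) hr ((annulus n k).indicator f) k
  rw [hself] at hle
  refine le_antisymm ?_ hle
  unfold herzNorm
  split_ifs with hr_top
  · refine iSup_le fun j => ?_
    rcases eq_or_ne j k with rfl | hj
    · rw [hself]
    · exact (hterm j hj).trans_le zero_le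
  · have hr' : 0 < r.toReal := ENNReal.toReal_pos hr.ne' hr_top
    rw [tsum_eq_single k fun j hj => by rw [hterm j hj, ENNReal.zero_rpow_of_pos hr'],
      ← ENNReal.rpow_mul, mul_one_div_cancel hr'.ne', ENNReal.rpow_one, hself]

theorem herzNorm_indicator_annulus_const_lt_top (hr : 0 < r) (k : ℤ) (c : ℝ) :
    herzNorm n s ⊤ r ((annulus n k).indicator fun _ => c) < ⊤ := by
  rw [herzNorm_indicator_annulus hr, eLpNorm_exponent_top]
  exact ENNReal.mul_lt_top ENNReal.ofReal_lt_top
    ((eLpNormEssSup_indicator_const_le _ c).trans_lt enorm_lt_top)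

end Annulus

theorem ofReal_min_one_div_two_le_max_enorm {c : ℝ} (hc : 0 ≤ c) (a : ℝ) :
    ENNReal.ofReal (min 1 c / 2) ≤ max (ENNReal.ofReal c * ‖1 - a‖ₑ) ‖a‖ₑ := by
  rw [Real.enorm_eq_ofReal_abs, Real.enorm_eq_ofReal_abs, ← ENNReal.ofReal_mul hc,
    ← ENNReal.ofReal_max]
  refine ENNReal.ofReal_le_ofReal ?_
  have htri : 1 ≤ |1 - a| + |a| := by simpa using abs_add_le (1 - a) a
  rcases le_total (1 / 2) |a| with ha | ha
  · exact le_max_of_le_right (by linarith [min_le_left 1 c])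
  · exact le_max_of_le_left (by nlinarith [min_le_right 1 c])

theorem ofReal_min_one_div_two_le_herzNorm_indicator_sub {n : ℕ} (hn : 1 ≤ n) (s : ℝ)
    {r : ℝ≥0∞} (hr : 0 < r) {g : Euc n → ℝ} (hg : Continuous g) :
    ENNReal.ofReal (min 1 ((2 : ℝ) ^ s) / 2) ≤
      herzNorm n s ⊤ r (fun x => (annulus n 1).indicator (fun _ => (1 : ℝ)) x - g x) := by
  set h := fun x => (annulus n 1).indicator (fun _ => (1 : ℝ)) x - g x
  obtain ⟨x₀, hx₀⟩ : ∃ x₀ : Euc n, ‖x₀‖ = 1 := ⟨EuclideanSpace.single ⟨0, hn⟩ 1, by simp⟩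
  have h_outer : ‖1 - g x₀‖ₑ ≤ eLpNorm ((annulus n 1).indicator h) ⊤ volume := by
    refine enorm_le_eLpNorm_top_of_eqOn (continuous_const.sub hg)
      (isOpen_ball.sdiff isClosed_closedBall) (fun x hx => ?_)
      (sphere_subset_closure_ball_diff_closedBall_inner
        (a := 2 ^ ((1 : ℤ) - 1)) (b := 2 ^ (1 : ℤ)) 0 (by norm_num) (by norm_num)
        (by simpa using hx₀))
    have hxA := ball_diff_closedBall_subset_annulus (n := n) 1 hx
    simp [h, hxA]
  have h_inner : ‖g x₀‖ₑ ≤ eLpNorm ((annulus n 0).indicator h) ⊤ volume := by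
    rw [← enorm_neg]
    refine enorm_le_eLpNorm_top_of_eqOn hg.neg
      (isOpen_ball.sdiff isClosed_closedBall) (fun x hx => ?_)
      (sphere_subset_closure_ball_diff_closedBall_outer
        (a := 2 ^ ((0 : ℤ) - 1)) (b := 2 ^ (0 : ℤ)) 0 (by norm_num) (by norm_num)
        (by simpa using hx₀))
    have hxA := ball_diff_closedBall_subset_annulus (n := n) 0 hx
    have hxA₁ : x ∉ annulus n 1 := disjoint_left.1 (annulus_disjoint (by norm_num)) hxA
    simp [h, hxA, hxA₁]
  calc ENNReal.ofReal (min 1 ((2 : ℝ) ^ s) / 2)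
      ≤ max (ENNReal.ofReal (2 ^ s) * ‖1 - g x₀‖ₑ) ‖g x₀‖ₑ :=
        ofReal_min_one_div_two_le_max_enorm (by positivity) _
    _ ≤ herzNorm n s ⊤ r h := by
      refine max_le ?_ ?_
      · simpa using (mul_le_mul_right h_outer _).trans (annulus_term_le_herzNorm hr h 1)
      · have h₀ := annulus_term_le_herzNorm (s := s) (q := ⊤) hr h 0
        rw [Int.cast_zero, zero_mul, Real.rpow_zero, ENNReal.ofReal_one, one_mul] at h₀
        exact h_inner.trans h₀

/-- For every `g ∈ C_c^∞(ℝⁿ)`, `‖χ_{A₁} - g‖_{K̇^s_{∞,r}} ≥ min(1, 2^s)/2`;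
in particular, `C_c^∞(ℝⁿ)` is not dense in `K̇^s_{∞,r}(ℝⁿ)`. -/
theorem herz_qinfty_not_dense
    (n : ℕ) (hn : 1 ≤ n) (s : ℝ) (r : ℝ≥0∞) (hr : 0 < r) :
    (∀ g : Euc n → ℝ, ContDiff ℝ (⊤ : ℕ∞) g → HasCompactSupport g →
      ENNReal.ofReal (min 1 ((2 : ℝ) ^ s) / 2) ≤
        herzNorm n s ⊤ r (fun x => (annulus n 1).indicator (fun _ => (1 : ℝ)) x - g x)) ∧
    ¬ (∀ f : Euc n → ℝ, Measurable f → herzNorm n s ⊤ r f < ⊤ →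
        ∀ ε : ℝ, 0 < ε → ∃ g : Euc n → ℝ, ContDiff ℝ (⊤ : ℕ∞) g ∧ HasCompactSupport g ∧
          herzNorm n s ⊤ r (fun x => f x - g x) < ENNReal.ofReal ε) := by
  refine ⟨fun g hg _ => ofReal_min_one_div_two_le_herzNorm_indicator_sub hn s hr hg.continuous,
    fun hdense => ?_⟩
  have hε : 0 < min 1 ((2 : ℝ) ^ s) / 2 :=
    div_pos (lt_min one_pos (Real.rpow_pos_of_pos two_pos s)) two_pos
  obtain ⟨g, hg, -, hlt⟩ := hdense _ (measurable_const.indicator (measurableSet_annulus 1))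
    (herzNorm_indicator_annulus_const_lt_top hr 1 1) _ hε
  exact (ofReal_min_one_div_two_le_herzNorm_indicator_sub hn s hr hg.continuous).not_gt hlt
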